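/- On the unit 3-sphere with metric g = dx₁² + sin²x₁ (dx₂² + sin²x₂ dx₃²) in hyperspherical coordinates, and for any nowhere-zero smooth function h = h(x₃), the vector field V = h(x₃) sin x₁ ∂/∂x₁ satisfies ∇_X V = (h cos x₁) X + θ(X) V with θ = (h'/h) dx₃; hence V is a proper torse-forming vector field with conformal scalar f = h(x₃) cos x₁. -/

import Mathlib

/-!
The field `V = (h sin x₁) e₁` is torse-forming frame vector by frame vector. Along `e₁` only
`sin x₁` varies, giving `(h cos x₁) e₁`; along `e₂` and `e₃` the Christoffel relations
`∇_{eᵢ} e₁ = cot x₁ eᵢ` turn `h sin x₁ ∇_{eᵢ} e₁` into `(h cos x₁) eᵢ`, and along `e₃` the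
derivative of `h(x₃)` contributes the extra term `(h'/h) dx₃(e₃) V`. Since `∇` is
`C`-linear in its first slot, the three frame identities combine to the identity for every `X`.
-/

/-- Algebraic model of a Riemannian manifold: `C` is the ring of smooth functions,
`X` the `C`-module of vector fields, `D` the action of vector fields on functions,
`lie` the Lie bracket, `g` the metric and `conn` its Levi-Civita connection. -/
structure LeviCivita (C X : Type) [CommRing C] [AddCommGroup X] [Module C X]
    (D : X → C → C) (lie : X → X → X) (g : X → X → C) (conn : X → X → X) : Prop where
  g_symm : ∀ A B, g A B = g B A
  g_add_left : ∀ A B Z, g (A + B) Z = g A Z + g B Z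
  g_smul_left : ∀ (c : C) (A Z : X), g (c • A) Z = c * g A Z
  g_nondeg : ∀ A, (∀ Z, g A Z = 0) → A = 0
  D_add : ∀ Z a b, D Z (a + b) = D Z a + D Z b
  D_mul : ∀ Z a b, D Z (a * b) = D Z a * b + a * D Z b
  D_add_vec : ∀ Z W a, D (Z + W) a = D Z a + D W a
  D_smul_vec : ∀ (c : C) (Z : X) (a : C), D (c • Z) a = c * D Z a
  conn_add_left : ∀ Z W Y, conn (Z + W) Y = conn Z Y + conn W Y
  conn_smul_left : ∀ (c : C) (Z Y : X), conn (c • Z) Y = c • conn Z Y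
  conn_add_right : ∀ Z A B, conn Z (A + B) = conn Z A + conn Z B
  conn_leibniz : ∀ (Z : X) (c : C) (Y : X), conn Z (c • Y) = D Z c • Y + c • conn Z Y
  metric_compat : ∀ Z A B, D Z (g A B) = g (conn Z A) B + g A (conn Z B)
  torsion_free : ∀ A B, conn A B - conn B A = lie A B

namespace LeviCivita

variable {C X : Type} [CommRing C] [AddCommGroup X] [Module C X]
  {D : X → C → C} {lie : X → X → X} {g : X → X → C} {conn : X → X → X}

theorem conn_mul_smul (hLC : LeviCivita C X D lie g conn) (Z : X) (u v : C) (Y : X) :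
    conn Z ((u * v) • Y) = (D Z u * v + u * D Z v) • Y + (u * v) • conn Z Y := by
  rw [hLC.conn_leibniz, hLC.D_mul]

theorem conn_smul_add_smul_add_smul (hLC : LeviCivita C X D lie g conn)
    (a1 a2 a3 : C) (e1 e2 e3 Y : X) :
    conn (a1 • e1 + a2 • e2 + a3 • e3) Y = a1 • conn e1 Y + a2 • conn e2 Y + a3 • conn e3 Y := by
  rw [hLC.conn_add_left, hLC.conn_add_left, hLC.conn_smul_left, hLC.conn_smul_left,
    hLC.conn_smul_left]

theorem conn_eq_smul_add_smul_of_frame (hLC : LeviCivita C X D lie g conn)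
    {e1 e2 e3 V : X} {f θ1 θ2 θ3 : C}
    (h1 : conn e1 V = f • e1 + θ1 • V) (h2 : conn e2 V = f • e2 + θ2 • V)
    (h3 : conn e3 V = f • e3 + θ3 • V) (a1 a2 a3 : C) :
    conn (a1 • e1 + a2 • e2 + a3 • e3) V =
      f • (a1 • e1 + a2 • e2 + a3 • e3) + (a1 * θ1 + a2 * θ2 + a3 * θ3) • V := by
  rw [hLC.conn_smul_add_smul_add_smul, h1, h2, h3]
  module

end LeviCivita

/-- Here `s1 = sin x₁`, `c1 = cos x₁`, `s2inv = 1 / sin x₂`, `hp = h'`, and the scalar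
`a₃ (s1inv * s2inv)` is `dx₃(a₁e₁ + a₂e₂ + a₃e₃)`. -/
theorem stmt18_general {C X : Type} [CommRing C] [AddCommGroup X] [Module C X]
    (D : X → C → C) (lie : X → X → X) (g : X → X → C) (conn : X → X → X)
    (hLC : LeviCivita C X D lie g conn)
    (e1 e2 e3 : X)
    (s1 c1 s1inv s2inv h hp hinv : C)
    (hs1 : s1 * s1inv = 1) (hh : h * hinv = 1)
    -- 'sin x₁' depends only on x₁, 'h' only on x₃:
    (hD1s1 : D e1 s1 = c1) (hD2s1 : D e2 s1 = 0) (hD3s1 : D e3 s1 = 0)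
    (hD1h : D e1 h = 0) (hD2h : D e2 h = 0) (hD3h : D e3 h = hp * (s1inv * s2inv))
    -- the stated Christoffel relations used:
    (hc11 : conn e1 e1 = 0)
    (hc21 : conn e2 e1 = (c1 * s1inv) • e2)
    (hc31 : conn e3 e1 = (c1 * s1inv) • e3) :
    ∀ a1 a2 a3 : C,
      conn (a1 • e1 + a2 • e2 + a3 • e3) ((h * s1) • e1) =
        (h * c1) • (a1 • e1 + a2 • e2 + a3 • e3)
          + ((hp * hinv) * (a3 * (s1inv * s2inv))) • ((h * s1) • e1) := by
  intro a1 a2 a3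
  have hV1 : conn e1 ((h * s1) • e1) = (h * c1) • e1 + (0 : C) • ((h * s1) • e1) := by
    rw [hLC.conn_mul_smul, hD1h, hD1s1, hc11]
    module
  have hV2 : conn e2 ((h * s1) • e1) = (h * c1) • e2 + (0 : C) • ((h * s1) • e1) := by
    rw [hLC.conn_mul_smul, hD2h, hD2s1, hc21]
    linear_combination (norm := module) (h * c1) • hs1 • e2
  have hV3 : conn e3 ((h * s1) • e1) =
      (h * c1) • e3 + (hp * hinv * (s1inv * s2inv)) • ((h * s1) • e1) := by
    rw [hLC.conn_mul_smul, hD3h, hD3s1, hc31]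
    linear_combination (norm := module) (h * c1) • hs1 • e3 - (hp * s1inv * s2inv * s1) • hh • e1
  rw [hLC.conn_eq_smul_add_smul_of_frame hV1 hV2 hV3]
  congr 2
  ring

/-- on `(S³, g)` with `g = dx₁² + sin²x₁(dx₂² + sin²x₂ dx₃²)`,
in the orthonormal frame `e₁, e₂, e₃` with the stated Christoffel relations,
the field `V = h(x₃) sin x₁ e₁` satisfies
`∇_X V = (h cos x₁) X + θ(X) V` with `θ = (h'/h) dx₃`; here `s1 = sin x₁`,
`c1 = cos x₁`, `s2 = sin x₂`, `hp = h'`, and `dx₃(a₁e₁+a₂e₂+a₃e₃) = a₃/(s1 s2)`. -/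
theorem stmt18 {C X : Type} [CommRing C] [AddCommGroup X] [Module C X]
    (D : X → C → C) (lie : X → X → X) (g : X → X → C) (conn : X → X → X)
    (hLC : LeviCivita C X D lie g conn)
    (e1 e2 e3 : X)
    (horth : g e1 e1 = 1 ∧ g e2 e2 = 1 ∧ g e3 e3 = 1 ∧
      g e1 e2 = 0 ∧ g e1 e3 = 0 ∧ g e2 e3 = 0)
    (s1 c1 s2 s1inv s2inv h hp hinv : C)
    (hs1 : s1 * s1inv = 1) (hs2 : s2 * s2inv = 1) (hh : h * hinv = 1)
    -- 'sin x₁' depends only on x₁, 'h' only on x₃: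
    (hD1s1 : D e1 s1 = c1) (hD2s1 : D e2 s1 = 0) (hD3s1 : D e3 s1 = 0)
    (hD1h : D e1 h = 0) (hD2h : D e2 h = 0) (hD3h : D e3 h = hp * (s1inv * s2inv))
    -- the stated Christoffel relations used:
    (hc11 : conn e1 e1 = 0)
    (hc21 : conn e2 e1 = (c1 * s1inv) • e2)
    (hc31 : conn e3 e1 = (c1 * s1inv) • e3) :
    ∀ a1 a2 a3 : C,
      conn (a1 • e1 + a2 • e2 + a3 • e3) ((h * s1) • e1) =
        (h * c1) • (a1 • e1 + a2 • e2 + a3 • e3)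
          + ((hp * hinv) * (a3 * (s1inv * s2inv))) • ((h * s1) • e1) :=
  stmt18_general D lie g conn hLC e1 e2 e3 s1 c1 s1inv s2inv h hp hinv hs1 hh hD1s1 hD2s1 hD3s1 hD1h
    hD2h hD3h hc11 hc21 hc31
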